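/- Let 𝒴 ⊂ ℝ be a finite set, let 𝒜, 𝒢₁, 𝒢₂, ℬ₂ be finite types, let p be a strictly positive probability mass function on 𝒴 × 𝒜 × 𝒢₁ × 𝒢₂ × ℬ₂, and fix a ∈ 𝒜. If Y ⊥ B₂ | (A, G₁, G₂) under p, then Var_p( ψ_a^{G₁,(G₂,B₂)}(Y,A,G₁,G₂,B₂) ) ≥ Var_p( ψ_a^{G₁,G₂}(Y,A,G₁,G₂) ). -/

import Mathlib

/-!
Under `Y ⊥ B₂ | (A, G₁, G₂)` the regressions `m₂` and `m₃` coincide, so both influence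
functions read `1{a' = a} · w · (y - m₃(g₁, g₂)) + c(g₁, g₂)` with the same offset `c`; only
the weights differ: `w₂(b₂) = p(g₁) p(g₂, b₂) / p(a, g₁, g₂, b₂)` against
`w₃ = p(g₁) p(g₂) / p(a, g₁, g₂)`, and `w₃` is the conditional mean of `w₂(B₂)` given
`(a, g₁, g₂)`. As `y - m₃` has conditional mean zero given `(a, g₁, g₂, b₂)`, the two influence
functions have the same mean, while on each cell `(a, g₁, g₂)` their second moments differ by
`p(a, g₁, g₂) · Var(w₂(B₂) | a, g₁, g₂) · E[(Y - m₃)² | a, g₁, g₂] ≥ 0`.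
-/

open Finset

noncomputable section

variable {Y : Finset ℝ} {A G₁ G₂ B₂ : Type}
variable [Fintype A] [Fintype G₁] [Fintype G₂] [Fintype B₂] [DecidableEq A]

/-- Marginal `p(g₁)`. -/
def pG1 (p : Y × A × G₁ × G₂ × B₂ → ℝ) (g₁ : G₁) : ℝ :=
  ∑ y : Y, ∑ a : A, ∑ g₂ : G₂, ∑ b₂ : B₂, p (y, a, g₁, g₂, b₂)

/-- Marginal `p(g₂)`. -/
def pG2 (p : Y × A × G₁ × G₂ × B₂ → ℝ) (g₂ : G₂) : ℝ :=
  ∑ y : Y, ∑ a : A, ∑ g₁ : G₁, ∑ b₂ : B₂, p (y, a, g₁, g₂, b₂)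

/-- Marginal `p(b₂)`. -/
def pB2 (p : Y × A × G₁ × G₂ × B₂ → ℝ) (b₂ : B₂) : ℝ :=
  ∑ y : Y, ∑ a : A, ∑ g₁ : G₁, ∑ g₂ : G₂, p (y, a, g₁, g₂, b₂)

/-- Marginal `p(g₂, b₂)`. -/
def pG2B2 (p : Y × A × G₁ × G₂ × B₂ → ℝ) (g₂ : G₂) (b₂ : B₂) : ℝ :=
  ∑ y : Y, ∑ a : A, ∑ g₁ : G₁, p (y, a, g₁, g₂, b₂)

/-- Marginal `p(a, g₁, b₂)`. -/
def pAG1B2 (p : Y × A × G₁ × G₂ × B₂ → ℝ) (a : A) (g₁ : G₁) (b₂ : B₂) : ℝ :=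
  ∑ y : Y, ∑ g₂ : G₂, p (y, a, g₁, g₂, b₂)

/-- Marginal `p(a, g₁, g₂, b₂)`. -/
def pAG1G2B2 (p : Y × A × G₁ × G₂ × B₂ → ℝ) (a : A) (g₁ : G₁) (g₂ : G₂) (b₂ : B₂) : ℝ :=
  ∑ y : Y, p (y, a, g₁, g₂, b₂)

/-- Marginal `p(a, g₁, g₂)`. -/
def pAG1G2 (p : Y × A × G₁ × G₂ × B₂ → ℝ) (a : A) (g₁ : G₁) (g₂ : G₂) : ℝ :=
  ∑ y : Y, ∑ b₂ : B₂, p (y, a, g₁, g₂, b₂)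

/-- Outcome regression `m₁(g₁,b₂) = ∑_y y·p(y | a, g₁, b₂)` for the
adjustment set `(G₁, B₂)`. -/
def m1 (p : Y × A × G₁ × G₂ × B₂ → ℝ) (a : A) (g₁ : G₁) (b₂ : B₂) : ℝ :=
  ∑ y : Y, (y : ℝ) * ((∑ g₂ : G₂, p (y, a, g₁, g₂, b₂)) / pAG1B2 p a g₁ b₂)

/-- Outcome regression `m₂(g₁,g₂,b₂) = ∑_y y·p(y | a, g₁, g₂, b₂)` for the
adjustment set `(G₁, (G₂, B₂))`. -/
def m2 (p : Y × A × G₁ × G₂ × B₂ → ℝ) (a : A) (g₁ : G₁) (g₂ : G₂) (b₂ : B₂) : ℝ :=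
  ∑ y : Y, (y : ℝ) * (p (y, a, g₁, g₂, b₂) / pAG1G2B2 p a g₁ g₂ b₂)

/-- Outcome regression `m₃(g₁,g₂) = ∑_y y·p(y | a, g₁, g₂)` for the
adjustment set `(G₁, G₂)`. -/
def m3 (p : Y × A × G₁ × G₂ × B₂ → ℝ) (a : A) (g₁ : G₁) (g₂ : G₂) : ℝ :=
  ∑ y : Y, (y : ℝ) * ((∑ b₂ : B₂, p (y, a, g₁, g₂, b₂)) / pAG1G2 p a g₁ g₂)

/-- Target parameter for the adjustment set `(G₁, B₂)`. -/
def T1 (p : Y × A × G₁ × G₂ × B₂ → ℝ) (a : A) : ℝ :=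
  ∑ g₁ : G₁, pG1 p g₁ * ∑ b₂ : B₂, pB2 p b₂ * m1 p a g₁ b₂

/-- Target parameter for the adjustment set `(G₁, (G₂, B₂))`. -/
def T2 (p : Y × A × G₁ × G₂ × B₂ → ℝ) (a : A) : ℝ :=
  ∑ g₁ : G₁, pG1 p g₁ * ∑ g₂ : G₂, ∑ b₂ : B₂, pG2B2 p g₂ b₂ * m2 p a g₁ g₂ b₂

/-- Target parameter for the adjustment set `(G₁, G₂)`. -/
def T3 (p : Y × A × G₁ × G₂ × B₂ → ℝ) (a : A) : ℝ :=
  ∑ g₁ : G₁, pG1 p g₁ * ∑ g₂ : G₂, pG2 p g₂ * m3 p a g₁ g₂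

/-- Influence function `ψ_a^{G₁,B₂}` for the adjustment set `(G₁, B₂)`. -/
def psi1 (p : Y × A × G₁ × G₂ × B₂ → ℝ) (a : A)
    (y : Y) (a' : A) (g₁ : G₁) (b₂ : B₂) : ℝ :=
  (if a' = a then (1 : ℝ) else 0) * (pG1 p g₁ * pB2 p b₂ / pAG1B2 p a g₁ b₂) *
      ((y : ℝ) - m1 p a g₁ b₂)
    + (∑ b₂' : B₂, pB2 p b₂' * m1 p a g₁ b₂')
    + (∑ g₁' : G₁, pG1 p g₁' * m1 p a g₁' b₂)
    - 2 * T1 p a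

/-- Influence function `ψ_a^{G₁,(G₂,B₂)}` for the adjustment set `(G₁, (G₂, B₂))`. -/
def psi2 (p : Y × A × G₁ × G₂ × B₂ → ℝ) (a : A)
    (y : Y) (a' : A) (g₁ : G₁) (g₂ : G₂) (b₂ : B₂) : ℝ :=
  (if a' = a then (1 : ℝ) else 0) *
      (pG1 p g₁ * pG2B2 p g₂ b₂ / pAG1G2B2 p a g₁ g₂ b₂) *
      ((y : ℝ) - m2 p a g₁ g₂ b₂)
    + (∑ g₂' : G₂, ∑ b₂' : B₂, pG2B2 p g₂' b₂' * m2 p a g₁ g₂' b₂')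
    + (∑ g₁' : G₁, pG1 p g₁' * m2 p a g₁' g₂ b₂)
    - 2 * T2 p a

/-- Influence function `ψ_a^{G₁,G₂}` for the adjustment set `(G₁, G₂)`. -/
def psi3 (p : Y × A × G₁ × G₂ × B₂ → ℝ) (a : A)
    (y : Y) (a' : A) (g₁ : G₁) (g₂ : G₂) : ℝ :=
  (if a' = a then (1 : ℝ) else 0) * (pG1 p g₁ * pG2 p g₂ / pAG1G2 p a g₁ g₂) *
      ((y : ℝ) - m3 p a g₁ g₂)
    + (∑ g₂' : G₂, pG2 p g₂' * m3 p a g₁ g₂')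
    + (∑ g₁' : G₁, pG1 p g₁' * m3 p a g₁' g₂)
    - 2 * T3 p a

/-- Conditional independence `G₂ ⊥ (A, G₁) | B₂` under `p`. -/
def CI_G2_AG1_B2 (p : Y × A × G₁ × G₂ × B₂ → ℝ) : Prop :=
  ∀ (g₂ : G₂) (a : A) (g₁ : G₁) (b₂ : B₂),
    (∑ y : Y, p (y, a, g₁, g₂, b₂)) / pB2 p b₂ =
      (pG2B2 p g₂ b₂ / pB2 p b₂) * (pAG1B2 p a g₁ b₂ / pB2 p b₂)

/-- Conditional independence `Y ⊥ B₂ | (A, G₁, G₂)` under `p`. -/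
def CI_Y_B2_AG1G2 (p : Y × A × G₁ × G₂ × B₂ → ℝ) : Prop :=
  ∀ (y : Y) (a : A) (g₁ : G₁) (g₂ : G₂) (b₂ : B₂),
    p (y, a, g₁, g₂, b₂) / pAG1G2 p a g₁ g₂ =
      ((∑ b₂' : B₂, p (y, a, g₁, g₂, b₂')) / pAG1G2 p a g₁ g₂) *
        (pAG1G2B2 p a g₁ g₂ b₂ / pAG1G2 p a g₁ g₂)

/-- Variance of a real function of the observation under `p`. -/
def VarP (p : Y × A × G₁ × G₂ × B₂ → ℝ) (f : Y × A × G₁ × G₂ × B₂ → ℝ) : ℝ :=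
  (∑ o : Y × A × G₁ × G₂ × B₂, p o * f o ^ 2) -
    (∑ o : Y × A × G₁ × G₂ × B₂, p o * f o) ^ 2

section WeightedSecondMoment

variable {ι κ : Type*} [Fintype ι] [Fintype κ] {μ e : ι → ℝ} {π : κ → ℝ}

theorem sum_sum_mul_affine (he : ∑ i, μ i * e i = 0) (f : κ → ℝ) (h : ℝ) :
    ∑ k, ∑ i, μ i * π k * (f k * e i + h) = (∑ k, π k) * (∑ i, μ i) * h := by
  have hk : ∀ k, ∑ i, μ i * π k * (f k * e i + h) = π k * ((∑ i, μ i) * h) := fun k => by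
    have hi : ∀ i, μ i * π k * (f k * e i + h) = π k * f k * (μ i * e i) + π k * h * μ i :=
      fun i => by ring
    simp only [hi, sum_add_distrib, ← mul_sum, he]
    ring
  rw [sum_congr rfl fun k _ => hk k, ← sum_mul, mul_assoc]

theorem sum_sum_mul_affine_sq (he : ∑ i, μ i * e i = 0) (f : κ → ℝ) (h : ℝ) :
    ∑ k, ∑ i, μ i * π k * (f k * e i + h) ^ 2 =
      ∑ k, π k * (f k ^ 2 * ∑ i, μ i * e i ^ 2 + h ^ 2 * ∑ i, μ i) := by
  refine sum_congr rfl fun k _ => ?_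
  have hi : ∀ i, μ i * π k * (f k * e i + h) ^ 2 =
      π k * f k ^ 2 * (μ i * e i ^ 2) + 2 * π k * f k * h * (μ i * e i) + π k * h ^ 2 * μ i :=
    fun i => by ring
  simp only [hi, sum_add_distrib, ← mul_sum, he]
  ring

-- The two sides differ by `(∑ π (r - c)²) · ∑ μ e²`.
theorem sum_sum_mul_affine_sq_mean_le (he : ∑ i, μ i * e i = 0) (hμ : ∀ i, 0 ≤ μ i)
    (hπ : ∀ k, 0 ≤ π k) {r : κ → ℝ} {c : ℝ} (hc : ∑ k, π k * r k = (∑ k, π k) * c) (h : ℝ) :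
    ∑ k, ∑ i, μ i * π k * (c * e i + h) ^ 2 ≤ ∑ k, ∑ i, μ i * π k * (r k * e i + h) ^ 2 := by
  rw [sum_sum_mul_affine_sq he (fun _ => c), sum_sum_mul_affine_sq he r]
  have hspread : ∑ k, π k * (r k - c) ^ 2 = ∑ k, π k * r k ^ 2 - (∑ k, π k) * c ^ 2 := by
    have hk : ∀ k, π k * (r k - c) ^ 2 = π k * r k ^ 2 - 2 * c * (π k * r k) + c ^ 2 * π k :=
      fun k => by ring
    simp only [hk, sum_add_distrib, sum_sub_distrib, ← mul_sum, hc]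
    ring
  have hspread_nonneg : 0 ≤ ∑ k, π k * (r k - c) ^ 2 :=
    sum_nonneg fun k _ => mul_nonneg (hπ k) (sq_nonneg _)
  have hsecond_nonneg : 0 ≤ ∑ i, μ i * e i ^ 2 :=
    sum_nonneg fun i _ => mul_nonneg (hμ i) (sq_nonneg _)
  have hgap := mul_nonneg hsecond_nonneg hspread_nonneg
  rw [hspread] at hgap
  simp only [mul_add, sum_add_distrib, ← mul_assoc, ← sum_mul]
  linarith

end WeightedSecondMoment

theorem Fintype.sum_prod_type_five_fst_inner {M α β γ δ ε : Type*} [AddCommMonoid M]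
    [Fintype α] [Fintype β] [Fintype γ] [Fintype δ] [Fintype ε] (F : α × β × γ × δ × ε → M) :
    ∑ o, F o = ∑ b, ∑ c, ∑ d, ∑ e, ∑ a, F (a, b, c, d, e) := by
  rw [Fintype.sum_prod_type_right]
  simp only [Fintype.sum_prod_type]

section Regressions

variable {Y : Finset ℝ} {A G₁ G₂ B₂ : Type} {p : Y × A × G₁ × G₂ × B₂ → ℝ}

theorem sum_pG2B2 [Fintype A] [Fintype G₁] [Fintype B₂] (g₂ : G₂) :
    ∑ b₂, pG2B2 p g₂ b₂ = pG2 p g₂ := by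
  simp only [pG2B2, pG2]
  rw [sum_comm]
  refine sum_congr rfl fun y _ => ?_
  rw [sum_comm]
  exact sum_congr rfl fun a _ => sum_comm

theorem sum_pAG1G2B2 [Fintype B₂] (a : A) (g₁ : G₁) (g₂ : G₂) :
    ∑ b₂, pAG1G2B2 p a g₁ g₂ b₂ = pAG1G2 p a g₁ g₂ :=
  sum_comm

theorem pAG1G2B2_pos [Nonempty Y] (hpos : ∀ o, 0 < p o) (a : A) (g₁ : G₁) (g₂ : G₂) (b₂ : B₂) :
    0 < pAG1G2B2 p a g₁ g₂ b₂ :=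
  sum_pos (fun _ _ => hpos _) univ_nonempty

theorem pAG1G2_pos [Fintype B₂] [Nonempty Y] [Nonempty B₂] (hpos : ∀ o, 0 < p o)
    (a : A) (g₁ : G₁) (g₂ : G₂) : 0 < pAG1G2 p a g₁ g₂ := by
  rw [← sum_pAG1G2B2]
  exact sum_pos (fun _ _ => pAG1G2B2_pos hpos ..) univ_nonempty

def condY [Fintype B₂] (p : Y × A × G₁ × G₂ × B₂ → ℝ) (a : A) (g₁ : G₁) (g₂ : G₂) (y : Y) : ℝ :=
  (∑ b₂ : B₂, p (y, a, g₁, g₂, b₂)) / pAG1G2 p a g₁ g₂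

theorem sum_condY_mul_sub_m3 [Fintype B₂] [Nonempty Y] [Nonempty B₂] (hpos : ∀ o, 0 < p o)
    (a : A) (g₁ : G₁) (g₂ : G₂) :
    ∑ y, condY p a g₁ g₂ y * ((y : ℝ) - m3 p a g₁ g₂) = 0 := by
  have hm3 : m3 p a g₁ g₂ = ∑ y, condY p a g₁ g₂ y * y :=
    sum_congr rfl fun y _ => mul_comm _ _
  have hmass : ∑ y, condY p a g₁ g₂ y = 1 := by
    simp only [condY, ← sum_div]
    exact div_self (pAG1G2_pos hpos a g₁ g₂).ne'
  simp only [mul_sub, sum_sub_distrib, ← sum_mul, hmass, ← hm3]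
  ring

theorem CI_Y_B2_AG1G2.apply_eq [Fintype B₂] (hCI : CI_Y_B2_AG1G2 p) (hpos : ∀ o, 0 < p o)
    (y : Y) (a : A) (g₁ : G₁) (g₂ : G₂) (b₂ : B₂) :
    p (y, a, g₁, g₂, b₂) = condY p a g₁ g₂ y * pAG1G2B2 p a g₁ g₂ b₂ := by
  have : Nonempty Y := ⟨y⟩
  have : Nonempty B₂ := ⟨b₂⟩
  have hP := (pAG1G2_pos hpos a g₁ g₂).ne'
  have h := hCI y a g₁ g₂ b₂
  rw [condY]
  field_simp at h ⊢
  linear_combination h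

theorem m2_eq_m3 [Fintype B₂] [Nonempty Y] (hCI : CI_Y_B2_AG1G2 p) (hpos : ∀ o, 0 < p o)
    (a : A) (g₁ : G₁) (g₂ : G₂) (b₂ : B₂) : m2 p a g₁ g₂ b₂ = m3 p a g₁ g₂ := by
  have hw := (pAG1G2B2_pos hpos a g₁ g₂ b₂).ne'
  refine sum_congr rfl fun y _ => ?_
  rw [hCI.apply_eq hpos, condY, mul_div_cancel_right₀ _ hw]

theorem sum_pG2B2_mul_m3 [Fintype A] [Fintype G₁] [Fintype G₂] [Fintype B₂] (a : A) (g₁ : G₁) :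
    ∑ g₂ : G₂, ∑ b₂ : B₂, pG2B2 p g₂ b₂ * m3 p a g₁ g₂ = ∑ g₂ : G₂, pG2 p g₂ * m3 p a g₁ g₂ :=
  sum_congr rfl fun g₂ _ => by rw [← sum_mul, sum_pG2B2]

theorem T2_eq_T3 [Fintype A] [Fintype G₁] [Fintype G₂] [Fintype B₂] [Nonempty Y]
    (hCI : CI_Y_B2_AG1G2 p) (hpos : ∀ o, 0 < p o) (a : A) :
    T2 p a = T3 p a := by
  simp only [T2, T3, m2_eq_m3 hCI hpos, sum_pG2B2_mul_m3]

-- The `ψ₃` weight is the `p(b₂ | a, g₁, g₂)`-average of the `ψ₂` weight.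
theorem sum_pAG1G2B2_mul_psi2_weight [Fintype A] [Fintype G₁] [Fintype G₂] [Fintype B₂]
    [Nonempty Y] [Nonempty B₂] (hpos : ∀ o, 0 < p o)
    (a : A) (g₁ : G₁) (g₂ : G₂) :
    ∑ b₂, pAG1G2B2 p a g₁ g₂ b₂ * (pG1 p g₁ * pG2B2 p g₂ b₂ / pAG1G2B2 p a g₁ g₂ b₂) =
      (∑ b₂, pAG1G2B2 p a g₁ g₂ b₂) * (pG1 p g₁ * pG2 p g₂ / pAG1G2 p a g₁ g₂) := by
  have hP := (pAG1G2_pos hpos a g₁ g₂).ne'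
  have hw : ∀ b₂, pAG1G2B2 p a g₁ g₂ b₂ * (pG1 p g₁ * pG2B2 p g₂ b₂ / pAG1G2B2 p a g₁ g₂ b₂) =
      pG1 p g₁ * pG2B2 p g₂ b₂ := fun b₂ => mul_div_cancel₀ _ (pAG1G2B2_pos hpos a g₁ g₂ b₂).ne'
  rw [sum_congr rfl fun b₂ _ => hw b₂, ← mul_sum, sum_pG2B2, sum_pAG1G2B2, mul_div_cancel₀ _ hP]

end Regressions

section InfluenceFunctions

variable {p : Y × A × G₁ × G₂ × B₂ → ℝ}

def psiOffset (p : Y × A × G₁ × G₂ × B₂ → ℝ) (a : A) (g₁ : G₁) (g₂ : G₂) : ℝ :=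
  (∑ g₂' : G₂, pG2 p g₂' * m3 p a g₁ g₂') + (∑ g₁' : G₁, pG1 p g₁' * m3 p a g₁' g₂) - 2 * T3 p a

theorem psi3_eq_affine (a : A) (y : Y) (a' : A) (g₁ : G₁) (g₂ : G₂) :
    psi3 p a y a' g₁ g₂ = (if a' = a then 1 else 0) * (pG1 p g₁ * pG2 p g₂ / pAG1G2 p a g₁ g₂) *
      ((y : ℝ) - m3 p a g₁ g₂) + psiOffset p a g₁ g₂ := by
  rw [psi3, psiOffset]
  ring

theorem psi2_eq_affine [Nonempty Y] (hCI : CI_Y_B2_AG1G2 p) (hpos : ∀ o, 0 < p o)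
    (a : A) (y : Y) (a' : A) (g₁ : G₁) (g₂ : G₂) (b₂ : B₂) :
    psi2 p a y a' g₁ g₂ b₂ = (if a' = a then 1 else 0) *
      (pG1 p g₁ * pG2B2 p g₂ b₂ / pAG1G2B2 p a g₁ g₂ b₂) * ((y : ℝ) - m3 p a g₁ g₂) +
        psiOffset p a g₁ g₂ := by
  simp only [psi2, psiOffset, m2_eq_m3 hCI hpos, T2_eq_T3 hCI hpos, sum_pG2B2_mul_m3]
  ring

theorem psi2_eq_psi3_of_ne [Nonempty Y] (hCI : CI_Y_B2_AG1G2 p) (hpos : ∀ o, 0 < p o)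
    {a a' : A} (ha' : a' ≠ a) (y : Y) (g₁ : G₁) (g₂ : G₂) (b₂ : B₂) :
    psi2 p a y a' g₁ g₂ b₂ = psi3 p a y a' g₁ g₂ := by
  rw [psi2_eq_affine hCI hpos, psi3_eq_affine, if_neg ha']
  ring

theorem sum_block_mul_comp_psi2 [Nonempty Y] (hCI : CI_Y_B2_AG1G2 p) (hpos : ∀ o, 0 < p o)
    (F : ℝ → ℝ) (a : A) (g₁ : G₁) (g₂ : G₂) :
    ∑ b₂, ∑ y, p (y, a, g₁, g₂, b₂) * F (psi2 p a y a g₁ g₂ b₂) =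
      ∑ b₂, ∑ y, condY p a g₁ g₂ y * pAG1G2B2 p a g₁ g₂ b₂ *
        F (pG1 p g₁ * pG2B2 p g₂ b₂ / pAG1G2B2 p a g₁ g₂ b₂ * ((y : ℝ) - m3 p a g₁ g₂) +
          psiOffset p a g₁ g₂) :=
  sum_congr rfl fun b₂ _ => sum_congr rfl fun y _ => by
    rw [hCI.apply_eq hpos, psi2_eq_affine hCI hpos, if_pos rfl, one_mul]

theorem sum_block_mul_comp_psi3 (hCI : CI_Y_B2_AG1G2 p) (hpos : ∀ o, 0 < p o)
    (F : ℝ → ℝ) (a : A) (g₁ : G₁) (g₂ : G₂) :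
    ∑ b₂, ∑ y, p (y, a, g₁, g₂, b₂) * F (psi3 p a y a g₁ g₂) =
      ∑ b₂, ∑ y, condY p a g₁ g₂ y * pAG1G2B2 p a g₁ g₂ b₂ *
        F (pG1 p g₁ * pG2 p g₂ / pAG1G2 p a g₁ g₂ * ((y : ℝ) - m3 p a g₁ g₂) +
          psiOffset p a g₁ g₂) :=
  sum_congr rfl fun b₂ _ => sum_congr rfl fun y _ => by
    rw [hCI.apply_eq hpos, psi3_eq_affine, if_pos rfl, one_mul]

theorem sum_block_mul_psi2_eq_psi3 [Nonempty Y] [Nonempty B₂] (hCI : CI_Y_B2_AG1G2 p)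
    (hpos : ∀ o, 0 < p o) (a a' : A) (g₁ : G₁) (g₂ : G₂) :
    ∑ b₂, ∑ y, p (y, a', g₁, g₂, b₂) * psi2 p a y a' g₁ g₂ b₂ =
      ∑ b₂, ∑ y, p (y, a', g₁, g₂, b₂) * psi3 p a y a' g₁ g₂ := by
  rcases eq_or_ne a' a with rfl | ha'
  · have he := sum_condY_mul_sub_m3 hpos a' g₁ g₂
    calc _ = _ := sum_block_mul_comp_psi2 hCI hpos id a' g₁ g₂
      _ = _ := sum_sum_mul_affine he _ _
      _ = _ := (sum_sum_mul_affine he (fun _ => _) _).symm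
      _ = _ := (sum_block_mul_comp_psi3 hCI hpos id a' g₁ g₂).symm
  · simp only [psi2_eq_psi3_of_ne hCI hpos ha']

theorem sum_block_mul_psi3_sq_le [Nonempty Y] [Nonempty B₂] (hCI : CI_Y_B2_AG1G2 p)
    (hpos : ∀ o, 0 < p o) (a a' : A) (g₁ : G₁) (g₂ : G₂) :
    ∑ b₂, ∑ y, p (y, a', g₁, g₂, b₂) * psi3 p a y a' g₁ g₂ ^ 2 ≤
      ∑ b₂, ∑ y, p (y, a', g₁, g₂, b₂) * psi2 p a y a' g₁ g₂ b₂ ^ 2 := by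
  rcases eq_or_ne a' a with rfl | ha'
  · calc _ = _ := sum_block_mul_comp_psi3 hCI hpos (· ^ 2) a' g₁ g₂
      _ ≤ _ := sum_sum_mul_affine_sq_mean_le (sum_condY_mul_sub_m3 hpos a' g₁ g₂)
          (fun y => div_nonneg (sum_nonneg fun _ _ => (hpos _).le) (pAG1G2_pos hpos a' g₁ g₂).le)
          (fun b₂ => (pAG1G2B2_pos hpos a' g₁ g₂ b₂).le)
          (sum_pAG1G2B2_mul_psi2_weight hpos a' g₁ g₂) _
      _ = _ := (sum_block_mul_comp_psi2 hCI hpos (· ^ 2) a' g₁ g₂).symm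
  · simp only [psi2_eq_psi3_of_ne hCI hpos ha', le_refl]

end InfluenceFunctions

theorem variance_deletion_backdoor_general
    (p : Y × A × G₁ × G₂ × B₂ → ℝ)
    (hpos : ∀ o, 0 < p o) (a : A)
    (hCI : CI_Y_B2_AG1G2 p) :
    VarP p (fun o => psi2 p a o.1 o.2.1 o.2.2.1 o.2.2.2.1 o.2.2.2.2) ≥
      VarP p (fun o => psi3 p a o.1 o.2.1 o.2.2.1 o.2.2.2.1) := by
  rcases isEmpty_or_nonempty (Y × A × G₁ × G₂ × B₂) with hempty | ⟨y, -, -, -, b₂⟩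
  · simp [VarP]
  have : Nonempty Y := ⟨y⟩
  have : Nonempty B₂ := ⟨b₂⟩
  have hmean : ∑ o, p o * psi2 p a o.1 o.2.1 o.2.2.1 o.2.2.2.1 o.2.2.2.2 =
      ∑ o, p o * psi3 p a o.1 o.2.1 o.2.2.1 o.2.2.2.1 := by
    simp only [Fintype.sum_prod_type_five_fst_inner, sum_block_mul_psi2_eq_psi3 hCI hpos]
  have hsq : ∑ o, p o * psi3 p a o.1 o.2.1 o.2.2.1 o.2.2.2.1 ^ 2 ≤
      ∑ o, p o * psi2 p a o.1 o.2.1 o.2.2.1 o.2.2.2.1 o.2.2.2.2 ^ 2 := by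
    simp only [Fintype.sum_prod_type_five_fst_inner]
    exact sum_le_sum fun a' _ => sum_le_sum fun g₁ _ => sum_le_sum fun g₂ _ =>
      sum_block_mul_psi3_sq_le hCI hpos a a' g₁ g₂
  rw [ge_iff_le, VarP, VarP, hmean]
  linarith

/-- Lemma 4.2 (deletion of overadjustment backdoor variables), discrete
form: under `Y ⊥ B₂ | (A, G₁, G₂)`, removing the backdoor covariates
`B₂` never increases the asymptotic variance of the WCDE influence
function. -/
theorem variance_deletion_backdoor
    (p : Y × A × G₁ × G₂ × B₂ → ℝ)
    (hpos : ∀ o, 0 < p o) (hsum : ∑ o, p o = 1) (a : A)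
    (hCI : CI_Y_B2_AG1G2 p) :
    VarP p (fun o => psi2 p a o.1 o.2.1 o.2.2.1 o.2.2.2.1 o.2.2.2.2) ≥
      VarP p (fun o => psi3 p a o.1 o.2.1 o.2.2.1 o.2.2.2.1) :=
  variance_deletion_backdoor_general p hpos a hCI

end
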